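/- E[ξₙ/n] = 1/e + O(1/n) and Var(ξₙ/n) = (1/n)(1/e - 2/e²) + O(1/n²) as n → ∞, where ξₙ is the number of first-round survivors in the Hungarian roulette with n players. -/

import Mathlib

open Filter Asymptotics Finset

/-- Valid shot configurations: each of the `n` players shoots someone else. -/
def shots (n : ℕ) : Finset (Fin n → Fin n) :=
  Finset.univ.filter fun f => ∀ i, f i ≠ i

/-- Number of survivors of the first round: players shot by nobody. -/
def xi {n : ℕ} (f : Fin n → Fin n) : ℕ :=
  (Finset.univ.filter fun i : Fin n => ∀ j, f j ≠ i).card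

/-- Expectation of `ξₙ / n` under the uniform distribution on configurations. -/
noncomputable def meanXi (n : ℕ) : ℝ :=
  (∑ f ∈ shots n, (xi f : ℝ) / n) / (shots n).card

/-- Variance of `ξₙ / n` under the uniform distribution on configurations. -/
noncomputable def varXi (n : ℕ) : ℝ :=
  (∑ f ∈ shots n, ((xi f : ℝ) / n - meanXi n) ^ 2) / (shots n).card

lemma card_filter_mem {n : ℕ} (T : Fin n → Finset (Fin n)) :
    (Finset.univ.filter fun f : Fin n → Fin n => ∀ k, f k ∈ T k).card
      = ∏ k, (T k).card := by
  rw [show (Finset.univ.filter fun f : Fin n → Fin n => ∀ k, f k ∈ T k)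
        = Fintype.piFinset T by ext f; simp [Fintype.mem_piFinset]]
  simp

lemma card_shots (n : ℕ) : (shots n).card = (n-1)^n := by
  have : shots n = Finset.univ.filter fun f : Fin n → Fin n => ∀ k, f k ∈ ({k}ᶜ : Finset (Fin n)) := by
    unfold shots; congr 1; ext f; simp
  rw [this, card_filter_mem]
  simp [Finset.card_compl]

lemma card_surv (n : ℕ) (i : Fin n) :
    ((shots n).filter fun f => ∀ j, f j ≠ i).card = (n-1)*(n-2)^(n-1) := by
  have h : ((shots n).filter fun f => ∀ j, f j ≠ i)
      = Finset.univ.filter fun f : Fin n → Fin n => ∀ k, f k ∈ ({k, i}ᶜ : Finset (Fin n)) := by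
    unfold shots
    rw [Finset.filter_filter]
    ext f
    simp [not_or, forall_and]
  rw [h, card_filter_mem]
  have h2 : ∀ k : Fin n, (({k, i}ᶜ : Finset (Fin n))).card = n - ({k, i} : Finset (Fin n)).card := by
    intro k; rw [Finset.card_compl, Fintype.card_fin]
  simp only [h2]
  rw [← Finset.mul_prod_erase _ _ (Finset.mem_univ i)]
  have : ({i, i} : Finset (Fin n)).card = 1 := by simp
  rw [this]
  have : ∀ k ∈ Finset.univ.erase i, n - ({k, i} : Finset (Fin n)).card = n - 2 := by
    intro k hk
    rw [Finset.card_pair (Finset.ne_of_mem_erase hk)]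
  rw [Finset.prod_congr rfl this, Finset.prod_const, Finset.card_erase_of_mem (Finset.mem_univ i)]
  simp

lemma card_surv2 (n : ℕ) (i j : Fin n) (hij : i ≠ j) :
    ((shots n).filter fun f => (∀ k, f k ≠ i) ∧ (∀ k, f k ≠ j)).card
      = (n-2)^2*(n-3)^(n-2) := by
  have h : ((shots n).filter fun f => (∀ k, f k ≠ i) ∧ (∀ k, f k ≠ j))
      = Finset.univ.filter fun f : Fin n → Fin n => ∀ k, f k ∈ ({k, i, j}ᶜ : Finset (Fin n)) := by
    unfold shots
    rw [Finset.filter_filter]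
    ext f
    simp [not_or, forall_and]
  rw [h, card_filter_mem]
  have h2 : ∀ k : Fin n, (({k, i, j}ᶜ : Finset (Fin n))).card = n - ({k, i, j} : Finset (Fin n)).card := by
    intro k; rw [Finset.card_compl, Fintype.card_fin]
  simp only [h2]
  rw [← Finset.mul_prod_erase _ _ (Finset.mem_univ i),
    ← Finset.mul_prod_erase _ _ (Finset.mem_erase.2 ⟨hij.symm, Finset.mem_univ j⟩)]
  have hci : ({i, i, j} : Finset (Fin n)).card = 2 := by
    rw [show ({i, i, j} : Finset (Fin n)) = {i, j} by ext x; simp; try tauto]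
    exact Finset.card_pair hij
  have hcj : ({j, i, j} : Finset (Fin n)).card = 2 := by
    rw [show ({j, i, j} : Finset (Fin n)) = {i, j} by ext x; simp; try tauto]
    exact Finset.card_pair hij
  rw [hci, hcj]
  have h3 : ∀ k ∈ (Finset.univ.erase i).erase j, n - ({k, i, j} : Finset (Fin n)).card = n - 3 := by
    intro k hk
    have hkj : k ≠ j := (Finset.mem_erase.1 hk).1
    have hki : k ≠ i := (Finset.mem_erase.1 (Finset.mem_erase.1 hk).2).1
    have : ({k, i, j} : Finset (Fin n)).card = 3 := by
      rw [Finset.card_insert_of_notMem (by simp [hki, hkj]), Finset.card_pair hij]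
    rw [this]
  rw [Finset.prod_congr rfl h3, Finset.prod_const,
    Finset.card_erase_of_mem (Finset.mem_erase.2 ⟨hij.symm, Finset.mem_univ j⟩),
    Finset.card_erase_of_mem (Finset.mem_univ i)]
  rw [Finset.card_univ, Fintype.card_fin, Nat.sub_sub]
  ring

lemma xi_eq_sum {n : ℕ} (f : Fin n → Fin n) :
    xi f = ∑ i : Fin n, if ∀ j, f j ≠ i then 1 else 0 := by
  unfold xi
  rw [Finset.card_filter]

lemma sum_xi (n : ℕ) :
    ∑ f ∈ shots n, xi f = n * ((n-1)*(n-2)^(n-1)) := by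
  simp only [xi_eq_sum]
  rw [Finset.sum_comm]
  have : ∀ i : Fin n, ∑ f ∈ shots n, (if ∀ j, f j ≠ i then 1 else 0)
      = (n-1)*(n-2)^(n-1) := by
    intro i
    rw [← Finset.card_filter, card_surv]
  rw [Finset.sum_congr rfl fun i _ => this i, Finset.sum_const, Finset.card_univ,
    Fintype.card_fin, smul_eq_mul]

lemma sum_xi_sq (n : ℕ) :
    ∑ f ∈ shots n, (xi f)^2
      = n * ((n-1)*(n-2)^(n-1)) + (n*(n-1)) * ((n-2)^2*(n-3)^(n-2)) := by
  have key : ∀ f : Fin n → Fin n, (xi f)^2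
      = ∑ i : Fin n, ∑ j : Fin n,
          (if (∀ k, f k ≠ i) ∧ (∀ k, f k ≠ j) then 1 else 0) := by
    intro f
    rw [xi_eq_sum, pow_two, Finset.sum_mul_sum]
    congr 1; ext i; congr 1; ext j
    split_ifs with h1 h2 h3 h3 <;> simp_all
  simp only [key]
  rw [Finset.sum_comm]
  have inner : ∀ i : Fin n,
      ∑ f ∈ shots n, ∑ j : Fin n, (if (∀ k, f k ≠ i) ∧ (∀ k, f k ≠ j) then 1 else 0)
      = (n-1)*(n-2)^(n-1) + (n-1) * ((n-2)^2*(n-3)^(n-2)) := by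
    intro i
    rw [Finset.sum_comm]
    rw [← Finset.add_sum_erase _ _ (Finset.mem_univ i)]
    have hdiag : ∑ f ∈ shots n, (if (∀ k, f k ≠ i) ∧ (∀ k, f k ≠ i) then 1 else 0)
        = (n-1)*(n-2)^(n-1) := by
      rw [← Finset.card_filter, ← card_surv n i]
      congr 1
      ext f; simp
    have hoff : ∀ j ∈ Finset.univ.erase i,
        ∑ f ∈ shots n, (if (∀ k, f k ≠ i) ∧ (∀ k, f k ≠ j) then 1 else 0)
        = (n-2)^2*(n-3)^(n-2) := by
      intro j hj
      rw [← Finset.card_filter, card_surv2 n i j (Ne.symm (Finset.mem_erase.1 hj).1)]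
    rw [hdiag, Finset.sum_congr rfl hoff, Finset.sum_const,
      Finset.card_erase_of_mem (Finset.mem_univ i), Finset.card_univ, Fintype.card_fin,
      smul_eq_mul]
  rw [Finset.sum_congr rfl fun i _ => inner i, Finset.sum_const, Finset.card_univ,
    Fintype.card_fin, smul_eq_mul, Nat.mul_add, Nat.mul_assoc]

lemma meanXi_eq (n : ℕ) (hn : 3 ≤ n) :
    meanXi n = (((n:ℝ)-2)/((n:ℝ)-1))^(n-1) := by
  have h1 : (1:ℕ) ≤ n := by omega
  have h2 : (2:ℕ) ≤ n := by omega
  have hn0 : (n:ℝ) ≠ 0 := by positivity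
  have hn1 : (n:ℝ) - 1 ≠ 0 := by
    have : (3:ℝ) ≤ n := by exact_mod_cast hn
    nlinarith
  unfold meanXi
  rw [← Finset.sum_div, ← Nat.cast_sum, sum_xi, card_shots]
  push_cast [Nat.cast_sub h1, Nat.cast_sub h2]
  rw [div_pow]
  have hpow : ((n:ℝ)-1)^n = ((n:ℝ)-1)^(n-1) * ((n:ℝ)-1) := by
    rw [← pow_succ, Nat.sub_add_cancel h1]
  rw [hpow]
  have hp1 : ((n:ℝ)-1)^(n-1) ≠ 0 := pow_ne_zero _ hn1
  field_simp

lemma m2_eq (n : ℕ) (hn : 3 ≤ n) :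
    (∑ f ∈ shots n, ((xi f : ℝ)/n)^2) / (shots n).card
      = (1/n) * (((n:ℝ)-2)/((n:ℝ)-1))^(n-1)
        + (((n:ℝ)-1)/n) * ((((n:ℝ)-2)/((n:ℝ)-1))^2 * (((n:ℝ)-3)/((n:ℝ)-1))^(n-2)) := by
  have h1 : (1:ℕ) ≤ n := by omega
  have h2 : (2:ℕ) ≤ n := by omega
  have h3 : (3:ℕ) ≤ n := hn
  have hn0 : (n:ℝ) ≠ 0 := by positivity
  have hR : (3:ℝ) ≤ n := by exact_mod_cast hn
  have hn1 : (n:ℝ) - 1 ≠ 0 := by nlinarith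
  have heq : ∀ f : Fin n → Fin n, ((xi f : ℝ)/n)^2 = ((xi f)^2 : ℕ) / (n^2 : ℝ) := by
    intro f; push_cast; rw [div_pow]
  rw [Finset.sum_congr rfl fun f _ => heq f, ← Finset.sum_div, ← Nat.cast_sum, sum_xi_sq,
    card_shots]
  push_cast [Nat.cast_sub h1, Nat.cast_sub h2, Nat.cast_sub h3]
  have hpow : ((n:ℝ)-1)^n = ((n:ℝ)-1)^(n-1) * ((n:ℝ)-1) := by
    rw [← pow_succ, Nat.sub_add_cancel h1]
  have hpow2 : ((n:ℝ)-1)^(n-1) = ((n:ℝ)-1)^(n-2) * ((n:ℝ)-1) := by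
    rw [← pow_succ, show n-2+1 = n-1 by omega]
  have hp1 : ((n:ℝ)-1)^(n-1) ≠ 0 := pow_ne_zero _ hn1
  have hp2 : ((n:ℝ)-1)^(n-2) ≠ 0 := pow_ne_zero _ hn1
  rw [div_pow, div_pow, div_pow, hpow, hpow2]
  field_simp

lemma varXi_eq_sub (n : ℕ) (h : ((shots n).card : ℝ) ≠ 0) :
    varXi n = (∑ f ∈ shots n, ((xi f:ℝ)/n)^2)/(shots n).card - (meanXi n)^2 := by
  have hm : meanXi n * (shots n).card = ∑ f ∈ shots n, (xi f:ℝ)/n := by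
    unfold meanXi; field_simp
  unfold varXi
  have key : ∀ f : Fin n → Fin n, ((xi f:ℝ)/n - meanXi n)^2
      = ((xi f:ℝ)/n)^2 - 2*meanXi n*((xi f:ℝ)/n) + meanXi n^2 := fun f => by ring
  rw [Finset.sum_congr rfl fun f _ => key f, Finset.sum_add_distrib, Finset.sum_sub_distrib,
    ← Finset.mul_sum, Finset.sum_const, nsmul_eq_mul, ← hm]
  field_simp
  ring


open Filter Asymptotics Finset

lemma log_taylor2 {x : ℝ} (h0 : 0 ≤ x) (h : x ≤ 1/2) :
    |Real.log (1-x) + x + x^2/2| ≤ 2*x^3 := by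
  have hx1 : |x| < 1 := by rw [abs_of_nonneg h0]; linarith
  have := Real.abs_log_sub_add_sum_range_le hx1 2
  rw [Finset.sum_range_succ, Finset.sum_range_succ, Finset.sum_range_zero] at this
  rw [abs_of_nonneg h0] at this
  norm_num at this
  have h1x : (1:ℝ)/2 ≤ 1 - x := by linarith
  have hb : x ^ 3 / (1 - x) ≤ 2 * x ^ 3 := by
    rw [div_le_iff₀ (by linarith)]
    nlinarith [pow_nonneg h0 3]
  calc |Real.log (1-x) + x + x^2/2| = |x + x^2/2 + Real.log (1-x)| := by ring_nf
    _ ≤ x ^ 3 / (1-x) := this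
    _ ≤ 2 * x^3 := hb

lemma pow_eq_exp {y : ℝ} (hy : 0 < y) (k : ℕ) :
    y ^ k = Real.exp (k * Real.log y) := by
  rw [Real.exp_nat_mul, Real.exp_log hy]

lemma a_est (m : ℝ) (hm : 9 ≤ m) (k : ℕ) (hk : (k:ℝ) = m) :
    |(1 - 1/m)^k - Real.exp (-1) * (1 - 1/(2*m))| ≤ 3/m^2 := by
  have hm0 : (0:ℝ) < m := by linarith
  have hx0 : (0:ℝ) ≤ 1/m := by positivity
  have hx2 : 1/m ≤ 1/2 := by rw [div_le_div_iff₀ hm0 (by norm_num)]; linarith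
  have hlog := log_taylor2 hx0 hx2
  have hy : (0:ℝ) < 1 - 1/m := by linarith
  set L := Real.log (1 - 1/m) with hL
  -- v := k * L + 1
  have hv : |m * L + 1 + 1/(2*m)| ≤ 2/m^2 := by
    have h1 : m * L + 1 + 1/(2*m) = m * (L + 1/m + (1/m)^2/2) := by field_simp
    rw [h1, abs_mul, abs_of_pos hm0]
    have : |L + 1/m + (1/m)^2/2| ≤ 2*(1/m)^3 := hlog
    calc m * |L + 1/m + (1/m)^2/2| ≤ m * (2*(1/m)^3) := by nlinarith
      _ = 2/m^2 := by field_simp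
  obtain ⟨v, hvdef⟩ : ∃ v : ℝ, v = m * L + 1 := ⟨_, rfl⟩
  rw [show m * L + 1 + 1/(2*m) = v + 1/(2*m) by rw [hvdef]] at hv
  have hvabs : |v| ≤ 1/(2*m) + 2/m^2 := by
    have h3 : |(-(1/(2*m)):ℝ)| = 1/(2*m) := by rw [abs_neg]; exact abs_of_pos (by positivity)
    calc |v| = |(v + 1/(2*m)) + (-(1/(2*m)))| := by congr 1; ring
      _ ≤ |v + 1/(2*m)| + |(-(1/(2*m)):ℝ)| := abs_add_le _ _
      _ ≤ 2/m^2 + 1/(2*m) := by rw [h3]; linarith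
      _ = 1/(2*m) + 2/m^2 := by ring
  have hv1 : |v| ≤ 1 := by
    have : 1/(2*m) ≤ 1 := by rw [div_le_one (by linarith)]; linarith
    have : 2/m^2 ≤ 2/81 := by
      apply div_le_div_of_nonneg_left (by norm_num) (by norm_num)
      nlinarith
    have h5 : 1/(2*m) ≤ 1/18 := by
      rw [div_le_div_iff₀ (by linarith) (by norm_num)]; linarith
    linarith
  have hexp : |Real.exp v - 1 - v| ≤ v^2 := by
    have := Real.abs_exp_sub_one_sub_id_le hv1
    simpa [sq_abs] using this
  have hpow : (1 - 1/m)^k = Real.exp (-1) * Real.exp v := by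
    rw [pow_eq_exp hy, hk, ← Real.exp_add]
    congr 1; rw [hvdef]; ring
  rw [hpow]
  have key : Real.exp (-1) * Real.exp v - Real.exp (-1) * (1 - 1/(2*m))
      = Real.exp (-1) * ((Real.exp v - 1 - v) + (v + 1/(2*m))) := by ring
  rw [key, abs_mul, abs_of_pos (Real.exp_pos _)]
  have hE : Real.exp (-1:ℝ) ≤ 1 := by
    rw [Real.exp_le_one_iff]; norm_num
  have h6 : |(Real.exp v - 1 - v) + (v + 1/(2*m))| ≤ v^2 + 2/m^2 := by
    have h7 : |v + 1/(2*m)| ≤ 2/m^2 := hv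
    calc |(Real.exp v - 1 - v) + (v + 1/(2*m))| ≤ |Real.exp v - 1 - v| + |v + 1/(2*m)| := abs_add_le _ _
      _ ≤ v^2 + 2/m^2 := add_le_add hexp h7
  have hv2 : v^2 ≤ 1/m^2 := by
    have h8 : |v| ≤ 1/m := by
      have : 1/(2*m) + 2/m^2 ≤ 1/m := by
        rw [div_add_div _ _ (by positivity) (by positivity), div_le_div_iff₀ (by positivity) hm0]
        ring_nf
        nlinarith
      linarith
    calc v^2 = |v|^2 := (sq_abs v).symm
      _ ≤ (1/m)^2 := by nlinarith [abs_nonneg v]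
      _ = 1/m^2 := by rw [div_pow]; norm_num
  calc Real.exp (-1) * |(Real.exp v - 1 - v) + (v + 1/(2*m))|
      ≤ 1 * (v^2 + 2/m^2) := by
        apply mul_le_mul hE h6 (abs_nonneg _) (by norm_num)
    _ = v^2 + 2/m^2 := one_mul _
    _ ≤ 1/m^2 + 2/m^2 := by linarith
    _ = 3/m^2 := by ring

lemma c_est (m : ℝ) (hm : 9 ≤ m) (k : ℕ) (hk : (k:ℝ) = m - 1) :
    |(1 - 2/m)^k - Real.exp (-2)| ≤ 36/m^2 := by
  have hm0 : (0:ℝ) < m := by linarith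
  have hx0 : (0:ℝ) ≤ 2/m := by positivity
  have hx2 : 2/m ≤ 1/2 := by rw [div_le_div_iff₀ hm0 (by norm_num)]; linarith
  have hlog := log_taylor2 hx0 hx2
  have hy : (0:ℝ) < 1 - 2/m := by linarith
  set L := Real.log (1 - 2/m) with hL
  obtain ⟨w, hwdef⟩ : ∃ w : ℝ, w = (m-1) * L + 2 := ⟨_, rfl⟩
  have hw : |w - 2/m^2| ≤ 16/m^2 := by
    have h1 : w - 2/m^2 = (m-1) * (L + 2/m + (2/m)^2/2) := by
      rw [hwdef]; field_simp; ring
    rw [h1, abs_mul, abs_of_pos (by linarith : (0:ℝ) < m - 1)]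
    have hc : |L + 2/m + (2/m)^2/2| ≤ 2*(2/m)^3 := hlog
    calc (m-1) * |L + 2/m + (2/m)^2/2| ≤ m * (2*(2/m)^3) := by
          apply mul_le_mul (by linarith) hc (abs_nonneg _) (le_of_lt hm0)
      _ = 16/m^2 := by field_simp; ring
  have hwabs : |w| ≤ 18/m^2 := by
    have h3 : |(2/m^2 : ℝ)| = 2/m^2 := abs_of_pos (by positivity)
    calc |w| = |(w - 2/m^2) + 2/m^2| := by congr 1; ring
      _ ≤ |w - 2/m^2| + |(2/m^2:ℝ)| := abs_add_le _ _
      _ ≤ 16/m^2 + 2/m^2 := by rw [h3]; linarith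
      _ = 18/m^2 := by ring
  have hw1 : |w| ≤ 1 := by
    have : 18/m^2 ≤ 18/81 := by
      apply div_le_div_of_nonneg_left (by norm_num) (by norm_num)
      nlinarith
    linarith
  have hexp : |Real.exp w - 1| ≤ 2 * |w| := Real.abs_exp_sub_one_le hw1
  have hpow : (1 - 2/m)^k = Real.exp (-2) * Real.exp w := by
    rw [pow_eq_exp hy, hk, ← Real.exp_add]
    congr 1; rw [hwdef]; ring
  rw [hpow]
  have key : Real.exp (-2) * Real.exp w - Real.exp (-2) = Real.exp (-2) * (Real.exp w - 1) := by
    ring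
  rw [key, abs_mul, abs_of_pos (Real.exp_pos _)]
  have hE : Real.exp (-2:ℝ) ≤ 1 := by rw [Real.exp_le_one_iff]; norm_num
  calc Real.exp (-2) * |Real.exp w - 1| ≤ 1 * (2 * |w|) := by
        apply mul_le_mul hE hexp (abs_nonneg _) (by norm_num)
    _ = 2 * |w| := one_mul _
    _ ≤ 2 * (18/m^2) := by linarith
    _ = 36/m^2 := by ring

lemma mean_est (n : ℕ) (hn : 10 ≤ n) : |meanXi n - Real.exp (-1)| ≤ 8/n := by
  have hnR : (10:ℝ) ≤ n := by exact_mod_cast hn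
  set m : ℝ := (n:ℝ) - 1 with hmdef
  have hm : 9 ≤ m := by rw [hmdef]; linarith
  have hm0 : (0:ℝ) < m := by linarith
  have hk : ((n-1 : ℕ) : ℝ) = m := by
    rw [Nat.cast_sub (by omega), hmdef]; norm_num
  have hfrac : ((n:ℝ)-2)/((n:ℝ)-1) = 1 - 1/m := by
    rw [hmdef]; field_simp [show (n:ℝ) - 1 ≠ 0 by linarith]; ring
  rw [meanXi_eq n (by omega), hfrac]
  have hA := a_est m hm (n-1) hk
  have htri : |(1 - 1/m)^(n-1) - Real.exp (-1)|
      ≤ |(1 - 1/m)^(n-1) - Real.exp (-1) * (1 - 1/(2*m))| + |Real.exp (-1) * (1 - 1/(2*m)) - Real.exp (-1)| := by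
    calc |(1 - 1/m)^(n-1) - Real.exp (-1)|
        = |((1 - 1/m)^(n-1) - Real.exp (-1) * (1 - 1/(2*m))) + (Real.exp (-1) * (1 - 1/(2*m)) - Real.exp (-1))| := by
          congr 1; ring
      _ ≤ _ := abs_add_le _ _
  have h2 : |Real.exp (-1) * (1 - 1/(2*m)) - Real.exp (-1)| ≤ 1/(2*m) := by
    have : Real.exp (-1) * (1 - 1/(2*m)) - Real.exp (-1) = -(Real.exp (-1) * (1/(2*m))) := by ring
    rw [this, abs_neg, abs_mul, abs_of_pos (Real.exp_pos _), abs_of_pos (by positivity : (0:ℝ) < 1/(2*m))]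
    have hE : Real.exp (-1:ℝ) ≤ 1 := by rw [Real.exp_le_one_iff]; norm_num
    calc Real.exp (-1) * (1/(2*m)) ≤ 1 * (1/(2*m)) :=
          mul_le_mul_of_nonneg_right hE (by positivity)
      _ = 1/(2*m) := one_mul _
  have h3 : 3/m^2 + 1/(2*m) ≤ 1/m := by
    rw [div_add_div _ _ (by positivity) (by positivity), div_le_div_iff₀ (by positivity) hm0]
    nlinarith
  have h4 : 1/m ≤ 8/(n:ℝ) := by
    rw [div_le_div_iff₀ hm0 (by linarith), hmdef]
    nlinarith
  linarith

set_option maxHeartbeats 2000000 in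
lemma var_combine (n m A B C E : ℝ) (hn : 10 ≤ n) (hmdef : m = n - 1)
    (hE0 : 0 < E) (hE1 : E ≤ 1)
    (hBdef : B = (1-1/m)^2 * C)
    (hA : |A - E*(1-1/(2*m))| ≤ 3/m^2)
    (hC : |C - E^2| ≤ 36/m^2) :
    |(1/n*A + (n-1)/n*B - A^2) - 1/n*(E - 2*E^2)| ≤ 210/n^2 := by
  have hm : 9 ≤ m := by rw [hmdef]; linarith
  have hm0 : (0:ℝ) < m := by linarith
  have hn0 : (0:ℝ) < n := by linarith
  have hmn' : m ≤ n := by rw [hmdef]; linarith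
  have h1msq : (0:ℝ) ≤ 1 - 1/m := by rw [sub_nonneg, div_le_one hm0]; linarith
  have h1mle : (1:ℝ) - 1/m ≤ 1 := by
    have : 0 < 1/m := by positivity
    linarith
  have hone : |(1 - 1/m)^2| ≤ 1 := by
    rw [abs_of_nonneg (by positivity)]
    nlinarith
  have hB : |B - E^2*(1-2/m)| ≤ 37/m^2 := by
    have hsmall : ((1:ℝ)-1/m)^2 - (1-2/m) = 1/m^2 := by field_simp; ring
    have hid : B - E^2*(1-2/m) = (1-1/m)^2*(C - E^2) + E^2*(1/m^2) := by
      rw [hBdef]; linear_combination E^2 * hsmall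
    rw [hid]
    calc |(1-1/m)^2*(C - E^2) + E^2*(1/m^2)|
        ≤ |(1-1/m)^2*(C - E^2)| + |E^2*(1/m^2)| := abs_add_le _ _
      _ = |(1-1/m)^2| * |C - E^2| + E^2*(1/m^2) := by
          rw [abs_mul, abs_mul, abs_of_pos (by positivity : (0:ℝ) < E^2),
            abs_of_pos (by positivity : (0:ℝ) < 1/m^2)]
      _ ≤ 1*(36/m^2) + 1*(1/m^2) := by
          apply add_le_add
          · exact mul_le_mul hone hC (abs_nonneg _) (by norm_num)
          · apply mul_le_mul_of_nonneg_right _ (by positivity)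
            nlinarith
      _ = 37/m^2 := by ring
  have hP : |E*(1-1/(2*m))| ≤ 1 := by
    rw [abs_mul, abs_of_pos hE0]
    have h1 : |1 - 1/(2*m)| ≤ 1 := by
      rw [abs_of_nonneg]
      · have : 0 < 1/(2*m) := by positivity
        linarith
      · rw [sub_nonneg, div_le_one (by positivity)]; linarith
    nlinarith [abs_nonneg (1 - 1/(2*m))]
  have hAbs : |A| ≤ 2 := by
    calc |A| = |(A - E*(1-1/(2*m))) + E*(1-1/(2*m))| := by congr 1; ring
      _ ≤ |A - E*(1-1/(2*m))| + |E*(1-1/(2*m))| := abs_add_le _ _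
      _ ≤ 3/m^2 + 1 := add_le_add hA hP
      _ ≤ 2 := by
          have : 3/m^2 ≤ 3/81 := by
            apply div_le_div_of_nonneg_left (by norm_num) (by norm_num)
            nlinarith
          linarith
  have hA2 : |A^2 - (E*(1-1/(2*m)))^2| ≤ 9/m^2 := by
    have hid : A^2 - (E*(1-1/(2*m)))^2
        = (A - E*(1-1/(2*m))) * (A + E*(1-1/(2*m))) := by ring
    rw [hid, abs_mul]
    have hsum : |A + E*(1-1/(2*m))| ≤ 3 := by
      calc |A + E*(1-1/(2*m))| ≤ |A| + |E*(1-1/(2*m))| := abs_add_le _ _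
        _ ≤ 2 + 1 := add_le_add hAbs hP
        _ = 3 := by norm_num
    calc |A - E*(1-1/(2*m))| * |A + E*(1-1/(2*m))|
        ≤ (3/m^2) * 3 := mul_le_mul hA hsum (abs_nonneg _) (by positivity)
      _ = 9/m^2 := by ring
  have hR : |(-(E/(2*m*n)) + E^2*(1/(m*n) - 1/(4*m^2)))| ≤ 2/m^2 := by
    have ht1 : |(-(E/(2*m*n)):ℝ)| ≤ 1/(2*m^2) := by
      rw [abs_neg, abs_of_pos (by positivity)]
      rw [div_le_div_iff₀ (by positivity) (by positivity)]
      have q1 : E*(2*m^2) ≤ 1*(2*m^2) := mul_le_mul_of_nonneg_right hE1 (by positivity)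
      have q2 : m*m ≤ m*n := mul_le_mul_of_nonneg_left hmn' (le_of_lt hm0)
      nlinarith [q1, q2]
    have ht2 : |E^2*(1/(m*n) - 1/(4*m^2))| ≤ 1/m^2 := by
      rw [abs_mul, abs_of_pos (by positivity : (0:ℝ) < E^2)]
      have habs : |1/(m*n) - 1/(4*m^2)| ≤ 1/m^2 := by
        rw [abs_le]
        constructor
        · have h0 : (0:ℝ) < 1/(m*n) := by positivity
          have h4 : 1/(4*m^2) ≤ 1/m^2 :=
            one_div_le_one_div_of_le (a := m^2) (by positivity) (by nlinarith [sq_nonneg m])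
          linarith
        · have h0 : (0:ℝ) < 1/(4*m^2) := by positivity
          have h5 : 1/(m*n) ≤ 1/m^2 :=
            one_div_le_one_div_of_le (a := m^2) (by positivity)
              (by nlinarith [mul_le_mul_of_nonneg_left hmn' (le_of_lt hm0)])
          linarith
      have hE2le : E^2 ≤ 1 := pow_le_one₀ (le_of_lt hE0) hE1
      calc E^2 * |1/(m*n) - 1/(4*m^2)| ≤ 1 * |1/(m*n) - 1/(4*m^2)| :=
            mul_le_mul_of_nonneg_right hE2le (abs_nonneg _)
        _ = |1/(m*n) - 1/(4*m^2)| := one_mul _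
        _ ≤ 1/m^2 := habs
    calc |(-(E/(2*m*n)) + E^2*(1/(m*n) - 1/(4*m^2)))|
        ≤ |(-(E/(2*m*n)):ℝ)| + |E^2*(1/(m*n) - 1/(4*m^2))| := abs_add_le _ _
      _ ≤ 1/(2*m^2) + 1/m^2 := add_le_add ht1 ht2
      _ ≤ 2/m^2 := by
          rw [div_add_div _ _ (by positivity) (by positivity),
            div_le_div_iff₀ (by positivity) (by positivity)]
          nlinarith
  have b1 : |(1/n)*(A - E*(1-1/(2*m)))| ≤ 3/m^2 := by
    rw [abs_mul, abs_of_pos (by positivity : (0:ℝ) < 1/n)]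
    have h1n : 1/n ≤ 1 := by rw [div_le_one hn0]; linarith
    nlinarith [abs_nonneg (A - E*(1-1/(2*m)))]
  have b2 : |((n-1)/n)*(B - E^2*(1-2/m))| ≤ 37/m^2 := by
    rw [abs_mul]
    have hc0 : (0:ℝ) ≤ (n-1)/n := by
      apply div_nonneg _ (le_of_lt hn0); linarith
    have hc1 : (n-1)/n ≤ 1 := by rw [div_le_one hn0]; linarith
    rw [abs_of_nonneg hc0]
    nlinarith [abs_nonneg (B - E^2*(1-2/m))]
  have hm2n : 1/m^2 ≤ 4/n^2 := by
    rw [div_le_div_iff₀ (by positivity) (by positivity), hmdef]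
    nlinarith
  have key : (1/n*A + (n-1)/n*B - A^2) - 1/n*(E - 2*E^2)
      = (1/n)*(A - E*(1-1/(2*m))) + ((n-1)/n)*(B - E^2*(1-2/m))
        - (A^2 - (E*(1-1/(2*m)))^2)
        + (-(E/(2*m*n)) + E^2*(1/(m*n) - 1/(4*m^2))) := by
    have h1 : n ≠ 0 := ne_of_gt hn0
    have h2 : n - 1 ≠ 0 := by linarith
    rw [hmdef]
    field_simp
    ring
  rw [key]
  generalize hg1 : (1/n)*(A - E*(1-1/(2*m))) = X1 at b1 ⊢
  generalize hg2 : ((n-1)/n)*(B - E^2*(1-2/m)) = X2 at b2 ⊢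
  generalize hg3 : A^2 - (E*(1-1/(2*m)))^2 = X3 at hA2 ⊢
  generalize hg4 : (-(E/(2*m*n)) + E^2*(1/(m*n) - 1/(4*m^2))) = X4 at hR ⊢
  have e1 := abs_le.1 b1
  have e2 := abs_le.1 b2
  have e3 := abs_le.1 hA2
  have e4 := abs_le.1 hR
  rw [abs_le]
  have hp2 : (0:ℝ) < 1/n^2 := by positivity
  have f1 := e1.1; have f2 := e1.2; have f3 := e2.1; have f4 := e2.2
  have f5 := e3.1; have f6 := e3.2; have f7 := e4.1; have f8 := e4.2
  ring_nf at hm2n hp2 f1 f2 f3 f4 f5 f6 f7 f8 ⊢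
  constructor <;> linarith

lemma var_est (n : ℕ) (hn : 10 ≤ n) :
    |varXi n - (1/n) * (Real.exp (-1) - 2 * Real.exp (-1)^2)| ≤ 210/(n:ℝ)^2 := by
  have hnR : (10:ℝ) ≤ n := by exact_mod_cast hn
  have hn0 : (0:ℝ) < n := by linarith
  have hk1 : ((n-1 : ℕ) : ℝ) = (n:ℝ) - 1 := by rw [Nat.cast_sub (by omega)]; norm_num
  have hk2 : ((n-2 : ℕ) : ℝ) = ((n:ℝ) - 1) - 1 := by
    rw [Nat.cast_sub (by omega)]; push_cast; ring
  have hE2 : Real.exp (-2:ℝ) = Real.exp (-1:ℝ)^2 := by rw [sq, ← Real.exp_add]; norm_num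
  have hfrac1 : ((n:ℝ)-2)/((n:ℝ)-1) = 1 - 1/((n:ℝ)-1) := by
    have : ((n:ℝ)-1) ≠ 0 := by linarith
    field_simp
    ring
  have hfrac2 : ((n:ℝ)-3)/((n:ℝ)-1) = 1 - 2/((n:ℝ)-1) := by
    have : ((n:ℝ)-1) ≠ 0 := by linarith
    field_simp; ring
  have hcard : ((shots n).card : ℝ) ≠ 0 := by
    rw [card_shots]
    have h1 : 0 < (n-1)^n := pow_pos (by omega) n
    exact_mod_cast h1.ne'
  have hVar : varXi n = 1/(n:ℝ) * ((1 - 1/((n:ℝ)-1))^(n-1))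
      + ((n:ℝ)-1)/(n:ℝ) * ((1 - 1/((n:ℝ)-1))^2 * (1 - 2/((n:ℝ)-1))^(n-2))
      - ((1 - 1/((n:ℝ)-1))^(n-1))^2 := by
    rw [varXi_eq_sub n hcard, m2_eq n (by omega), meanXi_eq n (by omega), hfrac1, hfrac2]
    try ring
  rw [hVar]
  exact var_combine (n:ℝ) ((n:ℝ)-1) _ _ _ _ hnR rfl (Real.exp_pos _)
    (by rw [Real.exp_le_one_iff]; norm_num) rfl
    (a_est ((n:ℝ)-1) (by linarith) (n-1) hk1)
    (by rw [← hE2]; exact c_est ((n:ℝ)-1) (by linarith) (n-2) hk2)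

theorem stmt_17 :
    ((fun n : ℕ => meanXi n - (Real.exp 1)⁻¹) =O[atTop] fun n : ℕ => ((n : ℝ))⁻¹) ∧
      ((fun n : ℕ =>
          varXi n - (1 / n) * ((Real.exp 1)⁻¹ - 2 * ((Real.exp 1) ^ 2)⁻¹))
        =O[atTop] fun n : ℕ => ((n : ℝ))⁻¹ ^ 2) := by
  have hexp1 : (Real.exp 1)⁻¹ = Real.exp (-1) := (Real.exp_neg 1).symm
  have hexp2 : ((Real.exp 1)^2)⁻¹ = Real.exp (-1)^2 := by
    rw [← hexp1, inv_pow]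
  constructor
  · rw [isBigO_iff]
    refine ⟨8, ?_⟩
    filter_upwards [eventually_ge_atTop 10] with n hn
    have hnR : (10:ℝ) ≤ n := by exact_mod_cast hn
    have h := mean_est n hn
    rw [Real.norm_eq_abs, Real.norm_eq_abs, hexp1]
    rw [abs_of_pos (by positivity : (0:ℝ) < (n:ℝ)⁻¹)]
    calc |meanXi n - Real.exp (-1)| ≤ 8/n := h
      _ = 8 * (n:ℝ)⁻¹ := by rw [div_eq_mul_inv]
  · rw [isBigO_iff]
    refine ⟨210, ?_⟩
    filter_upwards [eventually_ge_atTop 10] with n hn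
    have hnR : (10:ℝ) ≤ n := by exact_mod_cast hn
    have h := var_est n hn
    rw [Real.norm_eq_abs, Real.norm_eq_abs, hexp1, hexp2]
    rw [abs_of_pos (by positivity : (0:ℝ) < ((n:ℝ)⁻¹)^2)]
    calc |varXi n - 1/n * (Real.exp (-1) - 2*Real.exp (-1)^2)| ≤ 210/(n:ℝ)^2 := h
      _ = 210 * ((n:ℝ)⁻¹)^2 := by rw [inv_pow]; ring
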